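/- If a graph G admits an oriented 5-cycle double cover, then φ_4(G) = 2 (G admits an S³-flow, i.e., a flow into ℝ⁴ with all edge values of norm 1). -/

import Mathlib

open scoped BigOperators

/-- `Hd d` : vectors in `ℝ^d` with exactly one coordinate `1`, one `-1`, rest `0`. -/
def Hd (d : ℕ) : Set (EuclideanSpace ℝ (Fin d)) :=
  {x | ∃ i j : Fin d, i ≠ j ∧ x i = 1 ∧ x j = -1 ∧ ∀ k, k ≠ i → k ≠ j → x k = 0}
/-- A flow on a graph, represented as an antisymmetric function on ordered pairs of vertices,
supported on edges, with conservation at every vertex. -/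
def IsFlow {V : Type*} [Fintype V] {d : ℕ} (G : SimpleGraph V)
    (f : V → V → EuclideanSpace ℝ (Fin d)) : Prop :=
  (∀ u v, f u v = - f v u) ∧ (∀ u v, ¬ G.Adj u v → f u v = 0) ∧ (∀ v, ∑ u, f v u = 0)

/-- `G` admits a flow with all edge values in the (symmetric) set `X`. -/
def HasFlowIn {V : Type*} [Fintype V] {d : ℕ} (G : SimpleGraph V)
    (X : Set (EuclideanSpace ℝ (Fin d))) : Prop :=
  ∃ f, IsFlow G f ∧ ∀ u v, G.Adj u v → f u v ∈ X
/-- An oriented `d`-cycle double cover: `d` integer circulations with values in `{-1,0,1}`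
(each being an eulerian-oriented even subgraph, i.e. a directed cycle), such that every edge
lies in exactly two of them (`∑ i, (c i u v)^2 = 2`) with opposite orientations
(`∑ i, c i u v = 0`). -/
def IsOrientedCDC {V : Type*} [Fintype V] (G : SimpleGraph V) {d : ℕ}
    (c : Fin d → V → V → ℤ) : Prop :=
  (∀ i u v, c i u v = - c i v u) ∧
  (∀ i u v, ¬ G.Adj u v → c i u v = 0) ∧
  (∀ i u v, c i u v = 1 ∨ c i u v = 0 ∨ c i u v = -1) ∧
  (∀ i v, ∑ u, c i v u = 0) ∧
  (∀ u v, G.Adj u v → (∑ i, (c i u v)^2 = 2 ∧ ∑ i, c i u v = 0))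
/-- `G` admits an `(r, d)`-NZF: a flow into `ℝ^d` with all edge values of norm in `[1, r-1]`. -/
def HasNZF {V : Type*} [Fintype V] (G : SimpleGraph V) (r : ℝ) (d : ℕ) : Prop :=
  ∃ f : V → V → EuclideanSpace ℝ (Fin d), IsFlow G f ∧
    ∀ u v, G.Adj u v → ‖f u v‖ ∈ Set.Icc (1 : ℝ) (r - 1)

/-- The `d`-dimensional flow number: the infimum of `r ≥ 2` such that `G` has an `(r,d)`-NZF. -/
noncomputable def flowNumber {V : Type*} [Fintype V] (G : SimpleGraph V) (d : ℕ) : ℝ :=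
  sInf {r : ℝ | 2 ≤ r ∧ HasNZF G r d}

open Module RealInnerProductSpace

/-
Stacking the five cycles gives an integral flow into `ℝ⁵` whose value on every edge has two
nonzero entries `1` and `-1`: it has norm `√2` and lies in the hyperplane orthogonal to the
all-ones vector. Since a hyperplane of `ℝ⁵` is isometric to `ℝ⁴` and linear maps send flows to
flows, rescaling by `1/√2` gives a flow into `ℝ⁴` with unit values, i.e. a `(2, 4)`-NZF.
-/

theorem IsFlow.map_linearMap {V : Type*} [Fintype V] {G : SimpleGraph V} {d e : ℕ}
    {f : V → V → EuclideanSpace ℝ (Fin d)} (hf : IsFlow G f)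
    (L : EuclideanSpace ℝ (Fin d) →ₗ[ℝ] EuclideanSpace ℝ (Fin e)) :
    IsFlow G (fun u v => L (f u v)) := by
  obtain ⟨hanti, hsupp, hcons⟩ := hf
  exact ⟨fun u v => (congrArg L (hanti u v)).trans (map_neg L _),
    fun u v huv => (congrArg L (hsupp u v huv)).trans (map_zero L),
    fun v => (map_sum L _ _).symm.trans ((congrArg L (hcons v)).trans (map_zero L))⟩

theorem exists_linearMap_norm_eq_of_inner_eq_zero {E : Type*} [NormedAddCommGroup E]
    [InnerProductSpace ℝ E] {n : ℕ} (hE : finrank ℝ E = n + 1) {w : E} (hw : w ≠ 0) :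
    ∃ L : E →ₗ[ℝ] EuclideanSpace ℝ (Fin n), ∀ x, ⟪w, x⟫ = 0 → ‖L x‖ = ‖x‖ := by
  have : Fact (finrank ℝ E = n + 1) := ⟨hE⟩
  have : FiniteDimensional ℝ E := .of_fact_finrank_eq_succ n
  set K := (ℝ ∙ w)ᗮ
  refine ⟨(OrthonormalBasis.fromOrthogonalSpanSingleton n hw).repr.toLinearMap ∘ₗ
    K.orthogonalProjectionOnto.toLinearMap, fun x hx => ?_⟩
  have hxK : x ∈ K := Submodule.mem_orthogonal_singleton_iff_inner_right.mpr hx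
  have hproj : K.orthogonalProjectionOnto x = ⟨x, hxK⟩ :=
    K.orthogonalProjectionOnto_mem_subspace_eq_self ⟨x, hxK⟩
  simp [hproj]

def cycleVector {V : Type*} {d : ℕ} (c : Fin d → V → V → ℤ) (u v : V) :
    EuclideanSpace ℝ (Fin d) :=
  WithLp.toLp 2 fun i => (c i u v : ℝ)

namespace IsOrientedCDC

variable {V : Type*} [Fintype V] {G : SimpleGraph V} {d : ℕ} {c : Fin d → V → V → ℤ}

theorem isFlow_cycleVector (hc : IsOrientedCDC G c) : IsFlow G (cycleVector c) := by
  obtain ⟨hanti, hsupp, -, hcons, -⟩ := hc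
  refine ⟨fun u v => ?_, fun u v huv => ?_, fun v => ?_⟩
  · ext i
    simp [cycleVector, hanti i u v]
  · ext i
    simp [cycleVector, hsupp i u v huv]
  · ext i
    simp [cycleVector, WithLp.ofLp_sum, ← Int.cast_sum, hcons i v]

theorem norm_cycleVector (hc : IsOrientedCDC G c) {u v : V} (huv : G.Adj u v) :
    ‖cycleVector c u v‖ = √2 := by
  have hsq : ∑ i, (c i u v : ℝ) ^ 2 = 2 := by exact_mod_cast (hc.2.2.2.2 u v huv).1
  simp [EuclideanSpace.norm_eq, cycleVector, hsq]

theorem inner_one_cycleVector (hc : IsOrientedCDC G c) (u v : V) :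
    ⟪WithLp.toLp 2 fun _ => 1, cycleVector c u v⟫ = 0 := by
  have hsum : ∑ i, c i u v = 0 := by
    by_cases huv : G.Adj u v
    · exact (hc.2.2.2.2 u v huv).2
    · simp [hc.2.1 _ u v huv]
  simp [PiLp.inner_apply, cycleVector, ← Int.cast_sum, hsum]

theorem exists_unit_flow {n : ℕ} {c : Fin (n + 1) → V → V → ℤ} (hc : IsOrientedCDC G c) :
    ∃ f : V → V → EuclideanSpace ℝ (Fin n), IsFlow G f ∧
      ∀ u v, G.Adj u v → ‖f u v‖ = 1 := by
  have hone : (WithLp.toLp 2 fun _ => (1 : ℝ) : EuclideanSpace ℝ (Fin (n + 1))) ≠ 0 := by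
    simp [funext_iff]
  obtain ⟨L, hL⟩ := exists_linearMap_norm_eq_of_inner_eq_zero finrank_euclideanSpace_fin hone
  refine ⟨fun u v => ((√2)⁻¹ • L) (cycleVector c u v), hc.isFlow_cycleVector.map_linearMap _,
    fun u v huv => ?_⟩
  dsimp only
  rw [LinearMap.smul_apply, norm_smul, hL _ (hc.inner_one_cycleVector u v),
    hc.norm_cycleVector huv, norm_inv, Real.norm_of_nonneg (Real.sqrt_nonneg 2)]
  exact inv_mul_cancel₀ (by positivity)

end IsOrientedCDC

theorem flowNumber_eq_two_of_unit_flow {V : Type*} [Fintype V] {G : SimpleGraph V} {d : ℕ}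
    {f : V → V → EuclideanSpace ℝ (Fin d)} (hf : IsFlow G f)
    (hnorm : ∀ u v, G.Adj u v → ‖f u v‖ = 1) : flowNumber G d = 2 := by
  have hNZF : HasNZF G 2 d := ⟨f, hf, fun u v huv => by norm_num [hnorm u v huv]⟩
  exact le_antisymm (csInf_le ⟨2, fun r hr => hr.1⟩ ⟨le_rfl, hNZF⟩)
    (le_csInf ⟨2, le_rfl, hNZF⟩ fun r hr => hr.1)

/-- If `G` admits an oriented 5-cycle double cover then `φ_4(G) = 2`: `G` admits an
`S³`-flow, i.e. a flow into `ℝ⁴` with all edge values of norm `1`. -/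
theorem stmt19 {V : Type*} [Fintype V] (G : SimpleGraph V)
    (h : ∃ c : Fin 5 → V → V → ℤ, IsOrientedCDC G c) :
    flowNumber G 4 = 2 ∧
    ∃ f : V → V → EuclideanSpace ℝ (Fin 4), IsFlow G f ∧
      ∀ u v, G.Adj u v → ‖f u v‖ = 1 := by
  obtain ⟨c, hc⟩ := h
  obtain ⟨f, hf, hnorm⟩ := hc.exists_unit_flow
  exact ⟨flowNumber_eq_two_of_unit_flow hf hnorm, f, hf, hnorm⟩
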